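/- arXiv:2511.16061 — 2 statements merged into one kernel-verified Lean document; each statement's English description precedes it below -/
import Mathlib

section
/- Let ℝ^d = U ⊕ V be an orthogonal decomposition into nonzero subspaces, and let f_U, f_V: ℝ² → ℝ. Define the two-subspace radial activation σ(x) = f_U(‖x_U‖, ‖x_V‖)·x_U + f_V(‖x_U‖, ‖x_V‖)·x_V, where x = x_U + x_V with x_U ∈ U, x_V ∈ V. Suppose there exist a, b > 0 with f_U(a,b) ≠ f_V(a,b). Then there exists a one-dimensional subspace L ⊂ ℝ^d such that σ(L) ⊄ L. -/
/-!
Pick `u ∈ U` and `v ∈ Uᗮ` with `‖u‖ = a` and `‖v‖ = b`. Then `σ (u + v) = f_U a b • u + f_V a b • v`,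
and since `U` and `Uᗮ` are disjoint, this lies on the line through `u + v` only if the two
coefficients agree.
-/

open Submodule

theorem Submodule.eq_of_smul_add_smul_mem_span_add {R M : Type*} [DivisionRing R] [AddCommGroup M]
    [Module R M] {p q : Submodule R M} (hpq : Disjoint p q)
    {u v : M} (hu : u ∈ p) (hv : v ∈ q) (hu0 : u ≠ 0) (hv0 : v ≠ 0) {α β : R}
    (h : α • u + β • v ∈ span R {u + v}) : α = β := by
  obtain ⟨c, hc⟩ := mem_span_singleton.mp h
  have hsplit : (c - α) • u = (β - c) • v := by
    rw [sub_smul, sub_smul, sub_eq_sub_iff_add_eq_add, ← smul_add, hc, add_comm]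
  have hzero : (c - α) • u = 0 :=
    disjoint_def.mp hpq _ (p.smul_mem _ hu) (hsplit ▸ q.smul_mem _ hv)
  have hcα : c = α := sub_eq_zero.mp ((smul_eq_zero.mp hzero).resolve_right hu0)
  have hcβ : β = c := sub_eq_zero.mp ((smul_eq_zero.mp (hsplit ▸ hzero)).resolve_right hv0)
  exact hcα.symm.trans hcβ.symm

theorem Submodule.exists_mem_norm_eq {E : Type*} [NormedAddCommGroup E] [NormedSpace ℝ E]
    {K : Submodule ℝ E} (hK : K ≠ ⊥) {c : ℝ} (hc : 0 ≤ c) : ∃ u ∈ K, ‖u‖ = c := by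
  have := nontrivial_iff_ne_bot.mpr hK
  obtain ⟨u, hu⟩ := exists_norm_eq K hc
  exact ⟨u, u.2, hu⟩

section Projection

variable {𝕜 E : Type*} [RCLike 𝕜] [NormedAddCommGroup E] [InnerProductSpace 𝕜 E]
  {K : Submodule 𝕜 E} [K.HasOrthogonalProjection] {u v : E}

theorem Submodule.starProjection_add_of_mem_of_mem_orthogonal (hu : u ∈ K) (hv : v ∈ Kᗮ) :
    K.starProjection (u + v) = u :=
  eq_starProjection_of_mem_orthogonal' hu hv rfl

theorem Submodule.starProjection_orthogonal_add_of_mem_of_mem_orthogonal (hu : u ∈ K)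
    (hv : v ∈ Kᗮ) : Kᗮ.starProjection (u + v) = v := by
  rw [starProjection_orthogonal_val, starProjection_add_of_mem_of_mem_orthogonal hu hv,
    add_sub_cancel_left]

end Projection

theorem tsra_not_preserve_all_lines
    (d : ℕ) (U : Submodule ℝ (EuclideanSpace ℝ (Fin d)))
    (hU : U ≠ ⊥) (hV : Uᗮ ≠ ⊥)
    (f_U f_V : ℝ → ℝ → ℝ)
    (σ : EuclideanSpace ℝ (Fin d) → EuclideanSpace ℝ (Fin d))
    (hσ : ∀ x, σ x =
      f_U ‖(Submodule.orthogonalProjection U x : EuclideanSpace ℝ (Fin d))‖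
          ‖(Submodule.orthogonalProjection Uᗮ x : EuclideanSpace ℝ (Fin d))‖ •
        (Submodule.orthogonalProjection U x : EuclideanSpace ℝ (Fin d)) +
      f_V ‖(Submodule.orthogonalProjection U x : EuclideanSpace ℝ (Fin d))‖
          ‖(Submodule.orthogonalProjection Uᗮ x : EuclideanSpace ℝ (Fin d))‖ •
        (Submodule.orthogonalProjection Uᗮ x : EuclideanSpace ℝ (Fin d)))
    (hne : ∃ a b : ℝ, 0 < a ∧ 0 < b ∧ f_U a b ≠ f_V a b) :
    ∃ L : Submodule ℝ (EuclideanSpace ℝ (Fin d)),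
      Module.finrank ℝ L = 1 ∧ ¬ (∀ x ∈ L, σ x ∈ L) := by
  obtain ⟨a, b, ha, hb, hab⟩ := hne
  obtain ⟨u, huU, hua⟩ := exists_mem_norm_eq hU ha.le
  obtain ⟨v, hvV, hvb⟩ := exists_mem_norm_eq hV hb.le
  have hu0 : u ≠ 0 := norm_pos_iff.mp (hua ▸ ha)
  have hv0 : v ≠ 0 := norm_pos_iff.mp (hvb ▸ hb)
  have hprojU := starProjection_add_of_mem_of_mem_orthogonal huU hvV
  have hprojV := starProjection_orthogonal_add_of_mem_of_mem_orthogonal huU hvV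
  have hσuv : σ (u + v) = f_U a b • u + f_V a b • v := by
    simp only [hσ, coe_orthogonalProjectionOnto_apply, hprojU, hprojV, hua, hvb]
  have huv0 : u + v ≠ 0 := fun h => hu0 (by rw [← hprojU, h, map_zero])
  refine ⟨span ℝ {u + v}, finrank_span_singleton huv0, fun hL => hab ?_⟩
  exact eq_of_smul_add_smul_mem_span_add U.orthogonal_disjoint huU hvV hu0 hv0
    (hσuv ▸ hL _ (mem_span_singleton_self _))
end

section
/- Let ℝ^{d₁} = U ⊕ V be an orthogonal decomposition with orthogonal projections Q_U, Q_V, let W: ℝ^{d₀} → ℝ^{d₁} be linear, b ∈ ℝ^{d₁}, and let σ be a TSRA with respect to U and V. Then the span S of {σ(Wx + b) : x ∈ ℝ^{d₀}} satisfies dim S ≤ 2(d₀ + 1). -/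
/-!
Each value `σ y` lies in `span {Q_U y, Q_V y}`, and the pre-activations `W x + b` all lie in
`T = range W ⊔ span {b}`, a space of dimension at most `d₀ + 1`. Hence every activation lies in
`Q_U T ⊔ Q_V T`, whose dimension is at most `2 dim T`.
-/

open Module Submodule

section

variable {K V E : Type*} [DivisionRing K] [AddCommGroup V] [Module K V] [AddCommGroup E]
  [Module K E]

theorem add_mem_range_sup_span_singleton (f : V →ₗ[K] E) (b : E) (x : V) :
    f x + b ∈ LinearMap.range f ⊔ K ∙ b :=
  add_mem (mem_sup_left (LinearMap.mem_range_self f x))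
    (mem_sup_right (mem_span_singleton_self b))

theorem finrank_range_sup_span_singleton_le [FiniteDimensional K V] (f : V →ₗ[K] E) (b : E) :
    finrank K ↥(LinearMap.range f ⊔ K ∙ b) ≤ finrank K V + 1 :=
  (finrank_add_le_finrank_add_finrank _ _).trans
    (add_le_add (LinearMap.finrank_range_le f)
      (by simpa using finrank_span_le_card ({b} : Set E)))

theorem smul_add_smul_mem_map_sup_map {T : Submodule K V} (p q : V →ₗ[K] E) {x : V} (hx : x ∈ T)
    (a c : K) : a • p x + c • q x ∈ T.map p ⊔ T.map q :=
  add_mem (mem_sup_left (smul_mem _ a (mem_map_of_mem hx)))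
    (mem_sup_right (smul_mem _ c (mem_map_of_mem hx)))

theorem finrank_map_sup_map_le (T : Submodule K V) [FiniteDimensional K T] (p q : V →ₗ[K] E) :
    finrank K ↥(T.map p ⊔ T.map q) ≤ 2 * finrank K T := by
  calc finrank K ↥(T.map p ⊔ T.map q) ≤ finrank K (T.map p) + finrank K (T.map q) :=
        finrank_add_le_finrank_add_finrank _ _
    _ ≤ finrank K T + finrank K T := add_le_add (finrank_map_le p T) (finrank_map_le q T)
    _ = 2 * finrank K T := (two_mul _).symm

end

theorem tsra_span_dim_le_with_bias
    (d₀ d₁ : ℕ) (U : Submodule ℝ (EuclideanSpace ℝ (Fin d₁)))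
    (f_U f_V : ℝ → ℝ → ℝ)
    (σ : EuclideanSpace ℝ (Fin d₁) → EuclideanSpace ℝ (Fin d₁))
    (hσ : ∀ x, σ x =
      f_U ‖(Submodule.orthogonalProjectionOnto U x : EuclideanSpace ℝ (Fin d₁))‖
          ‖(Submodule.orthogonalProjectionOnto Uᗮ x : EuclideanSpace ℝ (Fin d₁))‖ •
        (Submodule.orthogonalProjectionOnto U x : EuclideanSpace ℝ (Fin d₁)) +
      f_V ‖(Submodule.orthogonalProjectionOnto U x : EuclideanSpace ℝ (Fin d₁))‖
          ‖(Submodule.orthogonalProjectionOnto Uᗮ x : EuclideanSpace ℝ (Fin d₁))‖ •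
        (Submodule.orthogonalProjectionOnto Uᗮ x : EuclideanSpace ℝ (Fin d₁)))
    (W : EuclideanSpace ℝ (Fin d₀) →ₗ[ℝ] EuclideanSpace ℝ (Fin d₁))
    (b : EuclideanSpace ℝ (Fin d₁)) :
    Module.finrank ℝ (Submodule.span ℝ {y | ∃ x, y = σ (W x + b)}) ≤ 2 * (d₀ + 1) := by
  set T := LinearMap.range W ⊔ ℝ ∙ b
  let Q_U : EuclideanSpace ℝ (Fin d₁) →ₗ[ℝ] EuclideanSpace ℝ (Fin d₁) := U.starProjection
  let Q_V : EuclideanSpace ℝ (Fin d₁) →ₗ[ℝ] EuclideanSpace ℝ (Fin d₁) := Uᗮ.starProjection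
  have hspan : span ℝ {y | ∃ x, y = σ (W x + b)} ≤ T.map Q_U ⊔ T.map Q_V := by
    rw [span_le]
    rintro _ ⟨x, rfl⟩
    rw [hσ]
    exact smul_add_smul_mem_map_sup_map Q_U Q_V (add_mem_range_sup_span_singleton W b x) _ _
  calc finrank ℝ ↥(span ℝ {y | ∃ x, y = σ (W x + b)})
      ≤ finrank ℝ ↥(T.map Q_U ⊔ T.map Q_V) := finrank_mono hspan
    _ ≤ 2 * finrank ℝ T := finrank_map_sup_map_le T Q_U Q_V
    _ ≤ 2 * (d₀ + 1) := by
      grw [finrank_range_sup_span_singleton_le, finrank_euclideanSpace_fin]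
end
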